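/- arXiv:2101.03030 — 4 statements merged into one kernel-verified Lean document; each statement's English description precedes it below -/
import Mathlib

section
/- Let β : ℕ → C([0,1], ℂ) be a family of continuous functions and M ≥ 0 a constant such that for every finite subset S' ⊆ ℕ one has ‖∑_{m ∈ S'} |β_m|²‖_∞ ≤ M (supremum norm). Let b : ℕ → C([0,1], ℂ) be such that the family (|b_m|²)_{m∈ℕ} is summable in C([0,1], ℝ) with sum h. Then the family (conj(β_m)·b_m)_{m∈ℕ} is summable in C([0,1], ℂ), and the supremum norm of its sum is at most √M · ‖h‖_∞^{1/2}. -/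
/-- For `g : C([0,1], ℂ)`, the continuous real function `t ↦ |g t|²`. -/
noncomputable def absSq (g : C(Set.Icc (0 : ℝ) 1, ℂ)) : C(Set.Icc (0 : ℝ) 1, ℝ) :=
  ⟨fun t => ‖g t‖ ^ 2, by fun_prop⟩

lemma key (β : ℕ → C(Set.Icc (0 : ℝ) 1, ℂ)) (M : ℝ) (hM : 0 ≤ M)
    (hβ : ∀ S' : Finset ℕ, ‖∑ m ∈ S', absSq (β m)‖ ≤ M)
    (b : ℕ → C(Set.Icc (0 : ℝ) 1, ℂ)) (S : Finset ℕ) :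
    ‖∑ m ∈ S, star (β m) * b m‖ ≤
      Real.sqrt M * Real.sqrt ‖∑ m ∈ S, absSq (b m)‖ := by
  rw [ContinuousMap.norm_le _ (by positivity)]
  intro t
  calc ‖(∑ m ∈ S, star (β m) * b m) t‖ = ‖∑ m ∈ S, (starRingEnd ℂ) (β m t) * b m t‖ := by
        simp [ContinuousMap.sum_apply]
    _ ≤ ∑ m ∈ S, ‖(starRingEnd ℂ) (β m t) * b m t‖ := norm_sum_le _ _
    _ = ∑ m ∈ S, ‖β m t‖ * ‖b m t‖ := by simp [norm_mul]
    _ ≤ Real.sqrt (∑ m ∈ S, ‖β m t‖ ^ 2) * Real.sqrt (∑ m ∈ S, ‖b m t‖ ^ 2) :=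
        Real.sum_mul_le_sqrt_mul_sqrt _ _ _
    _ ≤ Real.sqrt M * Real.sqrt ‖∑ m ∈ S, absSq (b m)‖ := by
        gcongr
        · calc ∑ m ∈ S, ‖β m t‖ ^ 2 = (∑ m ∈ S, absSq (β m)) t := by
                simp [ContinuousMap.sum_apply, absSq]
            _ ≤ ‖∑ m ∈ S, absSq (β m)‖ := ContinuousMap.apply_le_norm _ _
            _ ≤ M := hβ S
        · calc ∑ m ∈ S, ‖b m t‖ ^ 2 = (∑ m ∈ S, absSq (b m)) t := by
                simp [ContinuousMap.sum_apply, absSq]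
            _ ≤ ‖∑ m ∈ S, absSq (b m)‖ := ContinuousMap.apply_le_norm _ _

/-- Let `β : ℕ → C([0,1], ℂ)` and `M ≥ 0` be such that `‖∑_{m ∈ S'} |β_m|²‖_∞ ≤ M` for
every finite `S' ⊆ ℕ`, and let `b : ℕ → C([0,1], ℂ)` be such that `(|b_m|²)_m` is summable
in `C([0,1], ℝ)` with sum `h`. Then `(conj(β_m)·b_m)_m` is summable in `C([0,1], ℂ)` and
the sup-norm of its sum is at most `√M · ‖h‖_∞^{1/2}`. -/
theorem stmt6 (β : ℕ → C(Set.Icc (0 : ℝ) 1, ℂ)) (M : ℝ) (hM : 0 ≤ M)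
    (hβ : ∀ S' : Finset ℕ, ‖∑ m ∈ S', absSq (β m)‖ ≤ M)
    (b : ℕ → C(Set.Icc (0 : ℝ) 1, ℂ)) (h : C(Set.Icc (0 : ℝ) 1, ℝ))
    (hb : HasSum (fun m => absSq (b m)) h) :
    ∃ s : C(Set.Icc (0 : ℝ) 1, ℂ),
      HasSum (fun m => star (β m) * b m) s ∧ ‖s‖ ≤ Real.sqrt M * Real.sqrt ‖h‖ := by
  have hsum : Summable (fun m => star (β m) * b m) := by
    rw [summable_iff_vanishing]
    intro e he
    rcases Metric.mem_nhds_iff.1 he with ⟨ε, hε, hball⟩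
    have hδ : (0:ℝ) < (ε / (Real.sqrt M + 1)) ^ 2 := by positivity
    obtain ⟨s, hs⟩ := (summable_iff_vanishing.1 hb.summable)
      (Metric.ball 0 ((ε / (Real.sqrt M + 1)) ^ 2)) (Metric.ball_mem_nhds _ hδ)
    refine ⟨s, fun T hT => hball ?_⟩
    have h1 := hs T hT
    simp only [Metric.mem_ball, dist_zero_right] at h1 ⊢
    calc ‖∑ m ∈ T, star (β m) * b m‖ ≤
          Real.sqrt M * Real.sqrt ‖∑ m ∈ T, absSq (b m)‖ := key β M hM hβ b T
      _ < (Real.sqrt M + 1) * (ε / (Real.sqrt M + 1)) := by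
          have h2 : Real.sqrt ‖∑ m ∈ T, absSq (b m)‖ < ε / (Real.sqrt M + 1) := by
            rw [show ε / (Real.sqrt M + 1) = Real.sqrt ((ε / (Real.sqrt M + 1)) ^ 2) by
              rw [Real.sqrt_sq (by positivity)]]
            exact Real.sqrt_lt_sqrt (norm_nonneg _) h1
          have h3 : Real.sqrt M < Real.sqrt M + 1 := by linarith
          calc Real.sqrt M * Real.sqrt ‖∑ m ∈ T, absSq (b m)‖
              ≤ Real.sqrt M * (ε / (Real.sqrt M + 1)) := by
                gcongr
            _ < (Real.sqrt M + 1) * (ε / (Real.sqrt M + 1)) := by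
                have : (0:ℝ) < ε / (Real.sqrt M + 1) := by positivity
                nlinarith
      _ = ε := by field_simp
  refine ⟨∑' m, star (β m) * b m, hsum.hasSum, ?_⟩
  have htend : Filter.Tendsto (fun S : Finset ℕ => ‖∑ m ∈ S, star (β m) * b m‖)
      Filter.atTop (nhds ‖∑' m, star (β m) * b m‖) :=
    (continuous_norm.continuousAt).tendsto.comp hsum.hasSum
  refine le_of_tendsto htend (Filter.Eventually.of_forall fun S => ?_)
  refine (key β M hM hβ b S).trans ?_
  gcongr
  rw [ContinuousMap.norm_le _ (norm_nonneg h)]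
  intro t
  have hpt : HasSum (fun m => absSq (b m) t) (h t) :=
    hb.map (ContinuousMap.evalCLM (R := ℝ) t) (ContinuousMap.evalCLM (R := ℝ) t).continuous
  have h1 : (∑ m ∈ S, absSq (b m)) t = ∑ m ∈ S, absSq (b m) t := by
    simp [ContinuousMap.sum_apply]
  have h2 : ∑ m ∈ S, absSq (b m) t ≤ h t :=
    sum_le_hasSum S (fun m _ => by simp [absSq, sq_nonneg]) hpt
  have h3 : (0:ℝ) ≤ (∑ m ∈ S, absSq (b m)) t := by
    rw [h1]; exact Finset.sum_nonneg fun m _ => by simp [absSq, sq_nonneg]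
  rw [Real.norm_of_nonneg h3]
  exact (h1 ▸ h2).trans (ContinuousMap.apply_le_norm h t)
end

section
/- Let q ∈ (0,1] and let g ∈ C([0,1], ℂ) with g(q) ≠ 0. Then the family (|ψ_{q,m}·g|²)_{m≥1} is not summable in the Banach space C([0,1], ℝ) with the supremum norm; equivalently, the partial sums ∑_{m=1}^{M} |ψ_{q,m}(t) g(t)|² do not converge uniformly on [0,1] as M → ∞. -/
/-!
The partial sums telescope: `∑_{m<M} |ψ_{q,m+1} g|² = f_{q,M} |g|²`. As `M → ∞`, `f_{q,M}` tends
to `1` to the left of `q` and vanishes at `q`, so a uniform (hence pointwise) sum would be a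
continuous function equal to `|g|²` on `[0,q)` and to `0` at `q`, forcing `g(q) = 0`.
-/

/-- `f q m t = max 0 (min 1 (m * (q - t)))`. -/
noncomputable def f (q : ℝ) (m : ℕ) (t : ℝ) : ℝ := max 0 (min 1 (m * (q - t)))

/-- `ψ q m t = sqrt (f q m t - f q (m-1) t)` (for `m ≥ 1`). -/
noncomputable def ψ (q : ℝ) (m : ℕ) (t : ℝ) : ℝ := Real.sqrt (f q m t - f q (m - 1) t)

lemma continuous_ψ (q : ℝ) (m : ℕ) : Continuous (ψ q m) := by
  unfold ψ f; fun_prop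

/-- `ψ q m` as a continuous complex-valued function on `[0,1]`. -/
noncomputable def ψCc (q : ℝ) (m : ℕ) : C(Set.Icc (0 : ℝ) 1, ℂ) :=
  ⟨fun t => (ψ q m t.val : ℂ),
    Complex.continuous_ofReal.comp ((continuous_ψ q m).comp continuous_subtype_val)⟩

open Filter Topology Set

lemma f_monotone (q t : ℝ) : Monotone (fun m : ℕ => f q m t) := by
  intro m n hmn
  rcases le_or_gt 0 (q - t) with h | h
  · have : (m : ℝ) * (q - t) ≤ n * (q - t) := by gcongr
    exact max_le_max le_rfl (min_le_min le_rfl this)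
  · have hzero (k : ℕ) : f q k t = 0 :=
      max_eq_left ((min_le_right _ _).trans (mul_nonpos_of_nonneg_of_nonpos k.cast_nonneg h.le))
    simp only [hzero, le_refl]

lemma f_zero (q t : ℝ) : f q 0 t = 0 := by simp [f]

lemma f_self (q : ℝ) (m : ℕ) : f q m q = 0 := by simp [f]

lemma f_eq_one (q t : ℝ) (m : ℕ) (h : 1 ≤ m * (q - t)) : f q m t = 1 := by
  rw [f, min_eq_left h, max_eq_right zero_le_one]

lemma tendsto_f_atTop_of_lt {q t : ℝ} (ht : t < q) :
    Tendsto (fun m : ℕ => f q m t) atTop (𝓝 1) := by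
  refine tendsto_const_nhds.congr' ?_
  filter_upwards [eventually_ge_atTop ⌈(q - t)⁻¹⌉₊] with m hm
  refine (f_eq_one q t m ?_).symm
  rw [← div_le_iff₀ (sub_pos.mpr ht), one_div]
  exact (Nat.le_ceil _).trans (Nat.cast_le.mpr hm)

lemma sq_ψ_succ (q t : ℝ) (m : ℕ) : ψ q (m + 1) t ^ 2 = f q (m + 1) t - f q m t := by
  rw [ψ, Nat.add_sub_cancel, Real.sq_sqrt (sub_nonneg.mpr (f_monotone q t m.le_succ))]

lemma sum_range_sq_ψ_succ (q t : ℝ) (M : ℕ) :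
    ∑ m ∈ Finset.range M, ψ q (m + 1) t ^ 2 = f q M t := by
  simp only [sq_ψ_succ, Finset.sum_range_sub (fun m => f q m t), f_zero, sub_zero]

lemma hasSum_sq_ψ_succ_of_lt {q t : ℝ} (ht : t < q) :
    HasSum (fun m : ℕ => ψ q (m + 1) t ^ 2) 1 := by
  rw [hasSum_iff_tendsto_nat_of_nonneg (fun _ => sq_nonneg _)]
  simpa only [sum_range_sq_ψ_succ] using tendsto_f_atTop_of_lt ht

lemma ψ_succ_self (q : ℝ) (m : ℕ) : ψ q (m + 1) q = 0 := by
  simp [ψ, f_self]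

lemma absSq_apply (g : C(Icc (0 : ℝ) 1, ℂ)) (t : Icc (0 : ℝ) 1) : absSq g t = ‖g t‖ ^ 2 := rfl

lemma ψCc_apply (q : ℝ) (m : ℕ) (t : Icc (0 : ℝ) 1) : ψCc q m t = ψ q m t := rfl

lemma absSq_ψCc_mul_apply (q : ℝ) (m : ℕ) (g : C(Icc (0 : ℝ) 1, ℂ)) (t : Icc (0 : ℝ) 1) :
    absSq (ψCc q m * g) t = ψ q m t ^ 2 * ‖g t‖ ^ 2 := by
  rw [absSq_apply, ContinuousMap.mul_apply, ψCc_apply, norm_mul, mul_pow, Complex.norm_real,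
    Real.norm_eq_abs, sq_abs]

lemma mem_closure_setOf_val_lt {q : ℝ} (hq : q ∈ Ioc (0 : ℝ) 1) :
    (⟨q, hq.1.le, hq.2⟩ : Icc (0 : ℝ) 1) ∈ closure {t : Icc (0 : ℝ) 1 | t.val < q} := by
  rw [closure_subtype]
  have himage : ((↑) : Icc (0 : ℝ) 1 → ℝ) '' {t | t.val < q} = Ico 0 q := by
    ext x
    simp only [mem_image, Subtype.exists, mem_Icc, mem_Ico, exists_and_right, exists_eq_right]
    exact ⟨fun ⟨⟨h0, _⟩, hx⟩ => ⟨h0, hx⟩, fun ⟨h0, hx⟩ => ⟨⟨h0, hx.le.trans hq.2⟩, hx⟩⟩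
  rw [himage, closure_Ico hq.1.ne]
  exact right_mem_Icc.mpr hq.1.le

/-- For `q ∈ (0,1]` and `g ∈ C([0,1], ℂ)` with `g(q) ≠ 0`, the family
`(|ψ_{q,m}·g|²)_{m ≥ 1}` is not summable in `C([0,1], ℝ)` with the supremum norm. -/
theorem stmt8 (q : ℝ) (hq : q ∈ Set.Ioc (0 : ℝ) 1) (g : C(Set.Icc (0 : ℝ) 1, ℂ))
    (hg : g ⟨q, Set.mem_Icc.mpr ⟨hq.1.le, hq.2⟩⟩ ≠ 0) :
    ¬ Summable (fun m : ℕ => absSq (ψCc q (m + 1) * g)) := by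
  intro hsum
  set S := ∑' m : ℕ, absSq (ψCc q (m + 1) * g)
  have hS_apply (t : Icc (0 : ℝ) 1) :
      HasSum (fun m : ℕ => ψ q (m + 1) t ^ 2 * ‖g t‖ ^ 2) (S t) := by
    simpa only [ContinuousMap.evalCLM_apply, absSq_ψCc_mul_apply] using
      (ContinuousMap.evalCLM ℝ t).hasSum hsum.hasSum
  have hS_lt : EqOn S (absSq g) {t | t.val < q} := fun t ht =>
    (hS_apply t).unique <| by
      simpa only [absSq_apply, one_mul] using (hasSum_sq_ψ_succ_of_lt ht).mul_right (‖g t‖ ^ 2)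
  set x : Icc (0 : ℝ) 1 := ⟨q, hq.1.le, hq.2⟩
  have hS_self : S x = 0 := (hS_apply x).unique <| by simp [x, ψ_succ_self, hasSum_zero]
  have hS_eq : S x = absSq g x :=
    hS_lt.closure S.continuous (absSq g).continuous (mem_closure_setOf_val_lt hq)
  rw [hS_self, absSq_apply] at hS_eq
  exact hg (by simpa using hS_eq.symm)
end

section
/- Let q ∈ (0,1] and let g ∈ C([0,1], ℂ) be such that the family (|ψ_{q,m}·g|²)_{m≥1} is summable in the Banach space C([0,1], ℝ) with the supremum norm. Then g(q) = 0. -/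
/-- For `q ∈ (0,1]` and `g ∈ C([0,1], ℂ)`, if the family `(|ψ_{q,m}·g|²)_{m ≥ 1}` is
summable in `C([0,1], ℝ)` with the supremum norm, then `g(q) = 0`. -/
theorem stmt9 (q : ℝ) (hq : q ∈ Set.Ioc (0 : ℝ) 1) (g : C(Set.Icc (0 : ℝ) 1, ℂ))
    (hsum : Summable (fun m : ℕ => absSq (ψCc q (m + 1) * g))) :
    g ⟨q, Set.mem_Icc.mpr ⟨hq.1.le, hq.2⟩⟩ = 0 := by
  classical
  set S : C(Set.Icc (0 : ℝ) 1, ℝ) := ∑' m : ℕ, absSq (ψCc q (m + 1) * g) with hS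
  have hHS : HasSum (fun m : ℕ => absSq (ψCc q (m + 1) * g)) S := hsum.hasSum
  -- pointwise evaluation of the sum
  have heval : ∀ t : Set.Icc (0 : ℝ) 1,
      HasSum (fun m : ℕ => absSq (ψCc q (m + 1) * g) t) (S t) := by
    intro t
    exact hHS.map (AddMonoidHom.mk' (fun h : C(Set.Icc (0 : ℝ) 1, ℝ) => h t)
      (fun a b => rfl)) (continuous_eval_const t)
  -- term formula
  have hterm : ∀ (m : ℕ) (t : Set.Icc (0 : ℝ) 1),
      absSq (ψCc q (m + 1) * g) t = ψ q (m + 1) t.val ^ 2 * ‖g t‖ ^ 2 := by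
    intro m t
    have : ‖(ψ q (m + 1) t.val : ℂ) * g t‖ = |ψ q (m + 1) t.val| * ‖g t‖ := by
      rw [norm_mul, Complex.norm_real, Real.norm_eq_abs]
    have habs : |ψ q (m + 1) t.val| = ψ q (m + 1) t.val :=
      abs_of_nonneg (Real.sqrt_nonneg _)
    simp only [absSq, ContinuousMap.coe_mk, ContinuousMap.mul_apply, ψCc,
      ContinuousMap.coe_mk]
    rw [this, habs, mul_pow]
  -- ψ² telescopes when t ≤ q
  have hpsisq : ∀ (m : ℕ) (t : ℝ), t ≤ q → ψ q (m + 1) t ^ 2 = f q (m + 1) t - f q m t := by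
    intro m t ht
    have hmono : f q m t ≤ f q (m + 1) t := by
      apply max_le_max le_rfl
      apply min_le_min le_rfl
      have : (m : ℝ) ≤ (m + 1 : ℕ) := by push_cast; linarith
      exact mul_le_mul_of_nonneg_right this (by linarith)
    have : ψ q (m + 1) t = Real.sqrt (f q (m + 1) t - f q m t) := by
      simp [ψ]
    rw [this, Real.sq_sqrt (by linarith)]
  -- for 0 < q - t, HasSum ψ² 1
  have hkey : ∀ t : ℝ, t < q → HasSum (fun m : ℕ => ψ q (m + 1) t ^ 2) 1 := by
    intro t ht
    rw [hasSum_iff_tendsto_nat_of_nonneg (fun m => sq_nonneg _)]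
    have hsum_eq : ∀ n : ℕ, ∑ i ∈ Finset.range n, ψ q (i + 1) t ^ 2 = f q n t := by
      intro n
      have : ∀ i ∈ Finset.range n, ψ q (i + 1) t ^ 2 = f q (i + 1) t - f q i t :=
        fun i _ => hpsisq i t ht.le
      rw [Finset.sum_congr rfl this, Finset.sum_range_sub (fun i => f q i t)]
      simp [f]
    simp only [hsum_eq]
    -- eventually f q n t = 1
    obtain ⟨N, hN⟩ := exists_nat_ge (1 / (q - t))
    apply tendsto_atTop_of_eventually_const (i₀ := N)
    intro n hn
    have hqt : 0 < q - t := by linarith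
    have h1 : (1 : ℝ) ≤ n * (q - t) := by
      have : (1 / (q - t)) * (q - t) ≤ (n : ℝ) * (q - t) := by
        apply mul_le_mul_of_nonneg_right _ hqt.le
        exact hN.trans (by exact_mod_cast hn)
      rwa [one_div_mul_cancel hqt.ne'] at this
    simp [f, min_eq_left h1]
  -- S t = ‖g t‖² for t < q
  have hSlt : ∀ t : Set.Icc (0 : ℝ) 1, t.val < q → S t = ‖g t‖ ^ 2 := by
    intro t ht
    have h1 : HasSum (fun m : ℕ => absSq (ψCc q (m + 1) * g) t) (‖g t‖ ^ 2) := by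
      have := (hkey t.val ht).mul_right (‖g t‖ ^ 2)
      simpa only [one_mul, hterm] using this
    exact (heval t).unique h1
  -- S q = 0
  have hq01 : q ∈ Set.Icc (0 : ℝ) 1 := Set.mem_Icc.mpr ⟨hq.1.le, hq.2⟩
  have hSq : S ⟨q, hq01⟩ = 0 := by
    have h0 : HasSum (fun m : ℕ => absSq (ψCc q (m + 1) * g) ⟨q, hq01⟩) 0 := by
      have hz : ∀ m : ℕ, absSq (ψCc q (m + 1) * g) ⟨q, hq01⟩ = 0 := by
        intro m
        rw [hterm]
        have : ψ q (m + 1) q = 0 := by simp [ψ, f]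
        simp [this]
      simpa only [hz] using hasSum_zero
    exact (heval ⟨q, hq01⟩).unique h0
  -- sequence approaching q from the left
  have hseq : ∀ n : ℕ, q - q / (n + 1) ∈ Set.Icc (0 : ℝ) 1 := by
    intro n
    constructor
    · have : q / (n + 1) ≤ q := by
        apply div_le_self hq.1.le
        have : (0 : ℝ) ≤ n := Nat.cast_nonneg n
        linarith
      linarith
    · have : 0 < q / (n + 1) := div_pos hq.1 (by positivity)
      linarith [hq.2]
  set u : ℕ → Set.Icc (0 : ℝ) 1 := fun n => ⟨q - q / (n + 1), hseq n⟩ with hu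
  have hulim : Filter.Tendsto u Filter.atTop (nhds ⟨q, hq01⟩) := by
    rw [tendsto_subtype_rng]
    have : Filter.Tendsto (fun n : ℕ => q - q / (n + 1)) Filter.atTop (nhds (q - 0)) := by
      apply Filter.Tendsto.const_sub
      exact tendsto_const_nhds.div_atTop
        (Filter.tendsto_atTop_add_const_right _ 1 tendsto_natCast_atTop_atTop)
    simpa using this
  have hult : ∀ n : ℕ, (u n).val < q := by
    intro n
    have h1 : 0 < q / ((n : ℝ) + 1) := div_pos hq.1 (by positivity)
    have h2 : (u n).val = q - q / ((n : ℝ) + 1) := rfl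
    rw [h2]; linarith
  -- take limits
  have hlim1 : Filter.Tendsto (fun n => S (u n)) Filter.atTop (nhds (S ⟨q, hq01⟩)) :=
    (S.continuous.tendsto _).comp hulim
  have hlim2 : Filter.Tendsto (fun n => ‖g (u n)‖ ^ 2) Filter.atTop
      (nhds (‖g ⟨q, hq01⟩‖ ^ 2)) := by
    have : Continuous fun t : Set.Icc (0 : ℝ) 1 => ‖g t‖ ^ 2 := by fun_prop
    exact (this.tendsto _).comp hulim
  have heq : (fun n => S (u n)) = fun n => ‖g (u n)‖ ^ 2 :=
    funext fun n => hSlt (u n) (hult n)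
  rw [heq] at hlim1
  have : ‖g ⟨q, hq01⟩‖ ^ 2 = 0 := by
    rw [hSq] at hlim1
    exact tendsto_nhds_unique hlim2 hlim1
  have : ‖g ⟨q, hq01⟩‖ = 0 := by
    nlinarith [norm_nonneg (g ⟨q, hq01⟩)]
  exact norm_eq_zero.mp this
end

section
/- There exists a nonzero continuous linear functional φ on the pre-Hilbert space H ⊆ ℓ²(ℕ, ℂ) of finitely supported complex sequences (with the ℓ² inner product) such that φ vanishes on the set S := {e_n − 2·e_{n+1} : n ∈ ℕ}, even though S^⊥ ∩ H = {0}. Hence the kernel of φ is a proper closed subspace of H containing S whose orthogonal complement in H is trivial. -/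
/-!
Take `φ = ⟪g, ·⟫` with `g = (2⁻ⁿ)ₙ ∈ ℓ²`, which is not finitely supported. Then
`⟪g, eₙ - 2 eₙ₊₁⟫ = 2⁻ⁿ - 2 · 2⁻⁽ⁿ⁺¹⁾ = 0` while `φ e₀ = 1`. A vector `x ∈ H` orthogonal to every
`eₙ - 2 eₙ₊₁` satisfies `xₙ = 2 xₙ₊₁`; at the last nonzero entry of `x` this gives a contradiction,
so `S^⊥ = 0`. Finally `S ⊆ ker φ` gives `(ker φ)^⊥ ⊆ S^⊥ = 0`.
-/

/-- The pre-Hilbert space `H ⊆ ℓ²(ℕ, ℂ)` of finitely supported sequences, as a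
(non-closed) subspace of `ℓ²` with the induced inner-product norm. -/
noncomputable def Hfin : Submodule ℂ (lp (fun _ : ℕ => ℂ) 2) where
  carrier := {x | {n : ℕ | x n ≠ 0}.Finite}
  zero_mem' := Set.finite_empty.subset (by intro n hn; simp at hn)
  add_mem' := by
    intro a b ha hb
    apply (ha.union hb).subset
    intro n hn
    by_contra hc
    simp only [Set.mem_union, Set.mem_setOf_eq, not_or, not_not] at hc
    exact hn (by simp [lp.coeFn_add, Pi.add_apply, hc.1, hc.2])
  smul_mem' := by
    intro c x hx
    apply hx.subset
    intro n hn
    by_contra hc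
    simp only [Set.mem_setOf_eq, not_not] at hc
    exact hn (by simp [lp.coeFn_smul, Pi.smul_apply, hc])

open ComplexConjugate ENNReal

lemma memℓp_geometric {𝕜 : Type*} [NormedDivisionRing 𝕜] {r : 𝕜} (hr : ‖r‖ < 1)
    {p : ℝ≥0∞} (hp : 0 < p.toReal) : Memℓp (fun n : ℕ => r ^ n) p := by
  refine memℓp_gen <| (summable_geometric_of_lt_one (by positivity)
    (Real.rpow_lt_one (norm_nonneg r) hr hp)).congr fun n => ?_
  rw [norm_pow, Real.rpow_pow_comm (norm_nonneg r)]

noncomputable def geomLp (r : ℂ) (hr : ‖r‖ < 1) : lp (fun _ : ℕ => ℂ) 2 :=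
  ⟨fun n => r ^ n, memℓp_geometric hr (by norm_num)⟩

lemma inner_single_sub_smul_single {𝕜 : Type*} [RCLike 𝕜] (c : 𝕜) (n : ℕ)
    (x : lp (fun _ : ℕ => 𝕜) 2) :
    inner 𝕜 (lp.single 2 n (1 : 𝕜) - c • lp.single 2 (n + 1) (1 : 𝕜)) x
      = x n - conj c * x (n + 1) := by
  rw [inner_sub_left, inner_smul_left, lp.inner_single_left, lp.inner_single_left]
  simp

lemma inner_single_sub_smul_single_geomLp {c r : ℂ} (hr : ‖r‖ < 1) (hcr : conj c * r = 1)
    (n : ℕ) :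
    inner ℂ (lp.single 2 n (1 : ℂ) - c • lp.single 2 (n + 1) (1 : ℂ)) (geomLp r hr) = 0 := by
  rw [inner_single_sub_smul_single]
  change r ^ n - conj c * r ^ (n + 1) = 0
  linear_combination (-r ^ n) * hcr

lemma eq_zero_of_finite_support_of_eq_mul_succ {R : Type*} [MulZeroClass R] {x : ℕ → R}
    (c : R) (hx : {n | x n ≠ 0}.Finite) (h : ∀ n, x n = c * x (n + 1)) : x = 0 := by
  by_contra hne
  obtain ⟨m, hm, hmax⟩ := hx.exists_maximal (Function.ne_iff.1 hne)
  have hsucc : x (m + 1) = 0 := by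
    by_contra hne'
    exact Nat.not_succ_le_self m (hmax hne' m.le_succ)
  exact hm (by rw [h m, hsucc, mul_zero])

lemma single_mem_Hfin (n : ℕ) (a : ℂ) : lp.single 2 n a ∈ Hfin :=
  (Set.finite_singleton n).subset fun _ hj =>
    by_contra fun hne => hj (lp.single_apply_ne (E := fun _ : ℕ => ℂ) 2 n a hne)

lemma single_sub_smul_single_mem_Hfin (c : ℂ) (n : ℕ) :
    lp.single 2 n (1 : ℂ) - c • lp.single 2 (n + 1) (1 : ℂ) ∈ Hfin :=
  Hfin.sub_mem (single_mem_Hfin n 1) (Hfin.smul_mem c (single_mem_Hfin (n + 1) 1))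

lemma Hfin.eq_zero_of_forall_inner_single_sub_smul_single (c : ℂ) (x : Hfin)
    (h : ∀ n : ℕ, inner ℂ (lp.single 2 n (1 : ℂ) - c • lp.single 2 (n + 1) (1 : ℂ))
      (x : lp (fun _ : ℕ => ℂ) 2) = 0) : x = 0 := by
  have hx : (x : ℕ → ℂ) = 0 := by
    refine eq_zero_of_finite_support_of_eq_mul_succ (conj c) x.2 fun n => ?_
    rw [← sub_eq_zero, ← inner_single_sub_smul_single, h]
  exact Subtype.ext (lp.ext hx)

/-- There is a nonzero continuous linear functional `φ` on the pre-Hilbert space `H` of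
finitely supported sequences which vanishes on `S = {e_n - 2·e_{n+1} : n ∈ ℕ}`, even
though `S^⊥ ∩ H = {0}`; in particular `ker φ` is a proper closed subspace containing `S`
whose orthogonal complement in `H` is trivial. -/
theorem stmt13 :
    ∃ φ : Hfin →L[ℂ] ℂ, φ ≠ 0 ∧
      (∀ x : Hfin,
        (∃ n : ℕ, (x : lp (fun _ : ℕ => ℂ) 2) =
          lp.single 2 n (1 : ℂ) - (2 : ℂ) • lp.single 2 (n + 1) (1 : ℂ)) → φ x = 0) ∧
      (∀ x : Hfin,
        (∀ n : ℕ, (inner ℂ (lp.single 2 n (1 : ℂ) - (2 : ℂ) • lp.single 2 (n + 1) (1 : ℂ))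
          (x : lp (fun _ : ℕ => ℂ) 2) : ℂ) = 0) → x = 0) ∧
      (∀ x : Hfin,
        (∀ y : Hfin, φ y = 0 →
          (inner ℂ (y : lp (fun _ : ℕ => ℂ) 2) (x : lp (fun _ : ℕ => ℂ) 2) : ℂ) = 0) → x = 0) := by
  have hr : ‖(1 / 2 : ℂ)‖ < 1 := by norm_num
  have hcr : conj (2 : ℂ) * (1 / 2) = 1 := by rw [Complex.conj_ofNat]; norm_num
  let φ : Hfin →L[ℂ] ℂ := (innerSL ℂ (geomLp (1 / 2) hr)).comp Hfin.subtypeL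
  have hφS : ∀ (n : ℕ) (x : Hfin), (x : lp (fun _ : ℕ => ℂ) 2) =
      lp.single 2 n (1 : ℂ) - (2 : ℂ) • lp.single 2 (n + 1) (1 : ℂ) → φ x = 0 := by
    intro n x hx
    change inner ℂ (geomLp (1 / 2) hr) (x : lp (fun _ : ℕ => ℂ) 2) = 0
    rw [hx, ← inner_conj_symm, inner_single_sub_smul_single_geomLp hr hcr, map_zero]
  have hφe₀ : φ ⟨lp.single 2 0 1, single_mem_Hfin 0 1⟩ = 1 := by
    change inner ℂ (geomLp (1 / 2) hr) (lp.single 2 0 (1 : ℂ)) = 1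
    simp [lp.inner_single_right, geomLp]
  refine ⟨φ, fun hφ => by simp [hφ] at hφe₀, fun x ⟨n, hn⟩ => hφS n x hn,
    Hfin.eq_zero_of_forall_inner_single_sub_smul_single 2, fun x hx => ?_⟩
  exact Hfin.eq_zero_of_forall_inner_single_sub_smul_single 2 x fun n =>
    hx ⟨_, single_sub_smul_single_mem_Hfin 2 n⟩ (hφS n _ rfl)
end
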